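/- arXiv:2506.06481 — 5 statements merged into one kernel-verified Lean document; each statement's English description precedes it below -/
import Mathlib

section
/- For any real numbers x and y with x > y ≥ 0, the function t ↦ cosh(tx)/cosh(ty) is strictly increasing on the positive reals. -/
/-! The derivative of `t ↦ cosh (t x) / cosh (t y)` has numerator
`x sinh (t x) cosh (t y) - y cosh (t x) sinh (t y) = (x - y) sinh (t x) cosh (t y) + y sinh (t (x - y))`,
which is positive for `t > 0` because both summands are. -/

open Real

lemma hasDerivAt_cosh_mul_div_cosh_mul (x y t : ℝ) :
    HasDerivAt (fun t => cosh (t * x) / cosh (t * y))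
      ((sinh (t * x) * x * cosh (t * y) - cosh (t * x) * (sinh (t * y) * y)) / cosh (t * y) ^ 2)
      t := by
  have hx := ((hasDerivAt_id t).mul_const x).cosh
  have hy := ((hasDerivAt_id t).mul_const y).cosh
  simp only [id, one_mul] at hx hy
  exact hx.div hy (cosh_pos _).ne'

lemma sinh_mul_mul_cosh_mul_sub_cosh_mul_mul_sinh_mul_pos {x y t : ℝ} (hxy : y < x) (hy : 0 ≤ y)
    (ht : 0 < t) : 0 < sinh (t * x) * x * cosh (t * y) - cosh (t * x) * (sinh (t * y) * y) := by
  have hsplit : sinh (t * x) * x * cosh (t * y) - cosh (t * x) * (sinh (t * y) * y) =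
      (x - y) * sinh (t * x) * cosh (t * y) + y * sinh (t * x - t * y) := by
    rw [sinh_sub]; ring
  have hsinh_tx : 0 < sinh (t * x) := sinh_pos_iff.2 (mul_pos ht (hy.trans_lt hxy))
  have hsinh_diff : 0 ≤ sinh (t * x - t * y) :=
    sinh_nonneg_iff.2 (sub_nonneg.2 (mul_le_mul_of_nonneg_left hxy.le ht.le))
  rw [hsplit]
  exact add_pos_of_pos_of_nonneg
    (mul_pos (mul_pos (sub_pos.2 hxy) hsinh_tx) (cosh_pos _)) (mul_nonneg hy hsinh_diff)

theorem cosh_ratio_strictMonoOn (x y : ℝ) (hxy : x > y) (hy : y ≥ 0) :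
    StrictMonoOn (fun t : ℝ => Real.cosh (t * x) / Real.cosh (t * y)) (Set.Ioi 0) := by
  refine strictMonoOn_of_hasDerivWithinAt_pos (convex_Ioi 0)
    (fun t _ => (hasDerivAt_cosh_mul_div_cosh_mul x y t).continuousAt.continuousWithinAt)
    (fun t _ => (hasDerivAt_cosh_mul_div_cosh_mul x y t).hasDerivWithinAt) fun t ht => ?_
  rw [interior_Ioi] at ht
  exact div_pos (sinh_mul_mul_cosh_mul_sub_cosh_mul_mul_sinh_mul_pos hxy hy ht) (by positivity)
end

section
/- Let x₁, x₂, y₁, …, yₙ be positive real numbers satisfying x₁ > y_k for all k ∈ {1, …, n}. Then the function f(t) = cosh(x₁ t) + cosh(x₂ t) − Σ_{k=1}^n cosh(y_k t) has at most one zero in (0, ∞). -/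
/-!
Suppose `t₀ < t₁` are positive zeros and put `θ = t₁ / t₀ > 1`. The function
`H s = coshGap θ s = cosh (θ arcosh (1 + s)) - (1 + s)` vanishes at `0`, is strictly increasing
and strictly convex on `[0, ∞)` (its derivative is `θ sinh (θu) / sinh u - 1` with
`u = arcosh (1 + s)`, and `sinh (θu) / sinh u` increases), and maps `cosh (z t₀) - 1` to
`cosh (z t₁) - cosh (z t₀)`. With `a = cosh (x₁ t₀) - 1`, `b = cosh (x₂ t₀) - 1` and
`sₖ = cosh (yₖ t₀) - 1`, the zero at `t₀` forces `n ≥ 2` and hence `∑ sₖ ≤ a + b`, while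
`sₖ < a`. For such data a strictly convex, strictly increasing `H` with `H 0 = 0` satisfies
`∑ H sₖ < H a + H b`, i.e. the function is positive at `t₁`.
-/

open Real Set Finset

section ConvexFromZero

variable {f : ℝ → ℝ}

theorem ConvexOn.add_le_map_add_of_map_zero (hf : ConvexOn ℝ (Ici 0) f) (h0 : f 0 = 0)
    {x y : ℝ} (hx : 0 ≤ x) (hy : 0 ≤ y) : f x + f y ≤ f (x + y) := by
  rcases (add_nonneg hx hy).eq_or_lt with hxy | hxy
  · obtain ⟨rfl, rfl⟩ : x = 0 ∧ y = 0 := ⟨by linarith, by linarith⟩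
    simp [h0]
  have below_chord : ∀ z, 0 ≤ z → z ≤ x + y → f z ≤ z / (x + y) * f (x + y) := by
    intro z hz hzc
    have := hf.2 (mem_Ici.2 hxy.le) self_mem_Ici (div_nonneg hz hxy.le)
      (div_nonneg (sub_nonneg.2 hzc) hxy.le) (by field_simp; ring)
    simpa [h0, div_mul_cancel₀ _ hxy.ne'] using this
  calc f x + f y ≤ x / (x + y) * f (x + y) + y / (x + y) * f (x + y) :=
        add_le_add (below_chord x hx (by linarith)) (below_chord y hy (by linarith))
    _ = f (x + y) := by field_simp

theorem ConvexOn.sum_map_le_map_sum_of_map_zero (hf : ConvexOn ℝ (Ici 0) f) (h0 : f 0 = 0)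
    {ι : Type*} (t : Finset ι) {s : ι → ℝ} (hs : ∀ i ∈ t, 0 ≤ s i) :
    ∑ i ∈ t, f (s i) ≤ f (∑ i ∈ t, s i) := by
  induction t using Finset.cons_induction with
  | empty => simp [h0]
  | cons j t hj ih =>
    rw [sum_cons, sum_cons]
    have hs' : ∀ i ∈ t, 0 ≤ s i := fun i hi => hs i (mem_cons_of_mem hi)
    calc f (s j) + ∑ i ∈ t, f (s i) ≤ f (s j) + f (∑ i ∈ t, s i) := by gcongr; exact ih hs'
      _ ≤ f (s j + ∑ i ∈ t, s i) :=
        hf.add_le_map_add_of_map_zero h0 (hs j (mem_cons_self j t)) (sum_nonneg hs')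

theorem StrictConvexOn.add_lt_add_of_mem_Ioo {D : Set ℝ} (hf : StrictConvexOn ℝ D f)
    {a b p q : ℝ} (ha : a ∈ D) (hb : b ∈ D) (hp : p ∈ Ioo b a) (hpq : p + q = a + b) :
    f p + f q < f a + f b := by
  have hq : q ∈ Ioo b a := ⟨by linarith [hp.2], by linarith [hp.1]⟩
  have hfp := hf.secant_strict_mono_aux1 hb ha hp.1 hp.2
  have hfq := hf.secant_strict_mono_aux1 hb ha hq.1 hq.2
  have hba : 0 < a - b := sub_pos.2 (hp.1.trans hp.2)
  refine lt_of_mul_lt_mul_left ?_ hba.le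
  linear_combination hfp + hfq + (f a - f b) * hpq

theorem StrictConvexOn.sum_map_lt_map_add_map_of_map_zero (hf : StrictConvexOn ℝ (Ici 0) f)
    (h0 : f 0 = 0) (hmono : StrictMonoOn f (Ici 0)) {ι : Type*} (t : Finset ι) {s : ι → ℝ}
    {a b : ℝ} (ha : 0 < a) (hb : 0 ≤ b) (hs₀ : ∀ i ∈ t, 0 ≤ s i) (hsa : ∀ i ∈ t, s i < a)
    (hsum : ∑ i ∈ t, s i ≤ a + b) :
    ∑ i ∈ t, f (s i) < f a + f b := by
  induction t using Finset.cons_induction generalizing b with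
  | empty =>
    have hfa : f 0 < f a := hmono self_mem_Ici ha.le ha
    have hfb : f 0 ≤ f b := hmono.monotoneOn self_mem_Ici hb hb
    simp only [sum_empty]
    linarith
  | cons j t hj ih =>
    rw [sum_cons] at hsum ⊢
    have hs₀' : ∀ i ∈ t, 0 ≤ s i := fun i hi => hs₀ i (mem_cons_of_mem hi)
    have hj₀ : 0 ≤ s j := hs₀ j (mem_cons_self j t)
    -- Either `s j` fits under `b`, or `(s j, a + b - s j)` is majorized by `(a, b)`.
    rcases le_or_gt (s j) b with hjb | hbj
    · have hrest := ih (sub_nonneg.2 hjb) hs₀' (fun i hi => hsa i (mem_cons_of_mem hi))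
        (by linarith)
      have hsplit := hf.convexOn.add_le_map_add_of_map_zero h0 hj₀ (sub_nonneg.2 hjb)
      rw [add_sub_cancel] at hsplit
      linarith
    · have hja : s j < a := hsa j (mem_cons_self j t)
      have hrest : ∑ i ∈ t, f (s i) ≤ f (a + b - s j) :=
        (hf.convexOn.sum_map_le_map_sum_of_map_zero h0 t hs₀').trans
          (hmono.monotoneOn (sum_nonneg hs₀') (Set.mem_Ici.2 (by linarith)) (by linarith))
      have htransfer := hf.add_lt_add_of_mem_Ioo ha.le hb ⟨hbj, hja⟩
        (add_sub_cancel (s j) (a + b))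
      linarith

end ConvexFromZero

theorem sinh_mul_cosh_lt_mul_cosh_mul_sinh {θ u : ℝ} (hθ : 1 < θ) (hu : 0 < u) :
    sinh (θ * u) * cosh u < θ * cosh (θ * u) * sinh u := by
  let D : ℝ → ℝ := fun u => θ * cosh (θ * u) * sinh u - sinh (θ * u) * cosh u
  have hD : ∀ x, HasDerivAt D ((θ ^ 2 - 1) * (sinh (θ * x) * sinh x)) x := by
    intro x
    have hθx : HasDerivAt (fun x => θ * x) θ x := by simpa using (hasDerivAt_id x).const_mul θ
    exact (((hθx.cosh.const_mul θ).mul (hasDerivAt_sinh x)).sub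
      (hθx.sinh.mul (hasDerivAt_cosh x))).congr_deriv (by ring)
  have hmono : StrictMonoOn D (Ici 0) := by
    refine strictMonoOn_of_deriv_pos (convex_Ici 0) (by fun_prop) fun x hx => ?_
    rw [interior_Ici] at hx
    rw [(hD x).deriv]
    exact mul_pos (by nlinarith) (mul_pos (sinh_pos_iff.2 (mul_pos (by linarith) hx))
      (sinh_pos_iff.2 hx))
  have := hmono self_mem_Ici hu.le hu
  simp only [D, mul_zero, sinh_zero, cosh_zero] at this
  linarith

theorem strictMonoOn_sinh_mul_div_sinh {θ : ℝ} (hθ : 1 < θ) :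
    StrictMonoOn (fun u => sinh (θ * u) / sinh u) (Ioi 0) := by
  refine strictMonoOn_of_deriv_pos (convex_Ioi 0)
    (ContinuousOn.div (by fun_prop) (by fun_prop) fun x hx => (sinh_pos_iff.2 hx).ne')
    fun u hu => ?_
  rw [interior_Ioi] at hu
  have hsinh : 0 < sinh u := sinh_pos_iff.2 hu
  have hθu : HasDerivAt (fun x => θ * x) θ u := by simpa using (hasDerivAt_id u).const_mul θ
  have hR : HasDerivAt (fun u => sinh (θ * u) / sinh u)
      ((cosh (θ * u) * θ * sinh u - sinh (θ * u) * cosh u) / sinh u ^ 2) u :=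
    hθu.sinh.div (hasDerivAt_sinh u) hsinh.ne'
  rw [hR.deriv]
  have := sinh_mul_cosh_lt_mul_cosh_mul_sinh hθ hu
  apply div_pos _ (by positivity)
  linarith

noncomputable def coshGap (θ s : ℝ) : ℝ := cosh (θ * arcosh (1 + s)) - (1 + s)

theorem coshGap_zero (θ : ℝ) : coshGap θ 0 = 0 := by
  simp [coshGap, arcosh_zero]

theorem coshGap_cosh_sub_one {θ : ℝ} (hθ : 0 ≤ θ) (w : ℝ) :
    coshGap θ (cosh w - 1) = cosh (θ * w) - cosh w := by
  rw [coshGap, add_sub_cancel, ← cosh_abs w, arcosh_cosh (abs_nonneg w), ← cosh_abs (θ * w),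
    abs_mul, abs_of_nonneg hθ]

theorem hasDerivAt_coshGap (θ : ℝ) {s : ℝ} (hs : 0 < s) :
    HasDerivAt (coshGap θ)
      (θ * (sinh (θ * arcosh (1 + s)) / sinh (arcosh (1 + s))) - 1) s := by
  have h1 : 1 ≤ 1 + s := by linarith
  have harcosh : HasDerivAt (fun s => arcosh (1 + s)) (√((1 + s) ^ 2 - 1))⁻¹ s := by
    simpa using (hasDerivAt_arcosh (x := 1 + s) (by simpa using hs)).comp_const_add 1 s
  refine ((harcosh.const_mul θ).cosh.sub ((hasDerivAt_id s).const_add 1)).congr_deriv ?_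
  rw [sinh_arcosh h1]
  ring

theorem continuousOn_coshGap (θ : ℝ) : ContinuousOn (coshGap θ) (Ici 0) := by
  have : ContinuousOn (fun s => arcosh (1 + s)) (Ici 0) :=
    continuousOn_arcosh.comp (by fun_prop) fun s hs => by simpa using hs
  unfold coshGap
  fun_prop

theorem strictMonoOn_coshGap {θ : ℝ} (hθ : 1 < θ) : StrictMonoOn (coshGap θ) (Ici 0) := by
  refine strictMonoOn_of_deriv_pos (convex_Ici 0) (continuousOn_coshGap θ) fun s hs => ?_
  rw [interior_Ici, Set.mem_Ioi] at hs
  rw [(hasDerivAt_coshGap θ hs).deriv, sub_pos]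
  have hu : 0 < arcosh (1 + s) := arcosh_pos (by linarith)
  have hsinh : sinh (arcosh (1 + s)) < sinh (θ * arcosh (1 + s)) :=
    sinh_lt_sinh.2 (lt_mul_left hu hθ)
  have := (one_lt_div (sinh_pos_iff.2 hu)).2 hsinh
  nlinarith

theorem strictConvexOn_coshGap {θ : ℝ} (hθ : 1 < θ) : StrictConvexOn ℝ (Ici 0) (coshGap θ) := by
  refine StrictMonoOn.strictConvexOn_of_deriv (convex_Ici 0) (continuousOn_coshGap θ) ?_
  rw [interior_Ici]
  intro s hs s' hs' hss'
  rw [Set.mem_Ioi] at hs hs'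
  rw [(hasDerivAt_coshGap θ hs).deriv, (hasDerivAt_coshGap θ hs').deriv]
  have harcosh : arcosh (1 + s) < arcosh (1 + s') :=
    (arcosh_lt_arcosh (by linarith) (by linarith)).2 (by linarith)
  have hratio : sinh (θ * arcosh (1 + s)) / sinh (arcosh (1 + s))
      < sinh (θ * arcosh (1 + s')) / sinh (arcosh (1 + s')) :=
    strictMonoOn_sinh_mul_div_sinh hθ (arcosh_pos (by linarith)) (arcosh_pos (by linarith))
      harcosh
  exact sub_lt_sub_right (mul_lt_mul_of_pos_left hratio (by linarith)) 1

noncomputable def coshSum {n : ℕ} (x₁ x₂ : ℝ) (y : Fin n → ℝ) (t : ℝ) : ℝ :=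
  cosh (x₁ * t) + cosh (x₂ * t) - ∑ k, cosh (y k * t)

theorem two_le_of_coshSum_eq_zero {n : ℕ} {x₁ x₂ t : ℝ} {y : Fin n → ℝ}
    (hyx : ∀ k, |y k| ≤ |x₁|) (ht : coshSum x₁ x₂ y t = 0) : 2 ≤ n := by
  by_contra! hn
  have hk : ∀ k, cosh (y k * t) ≤ cosh (x₁ * t) := fun k => by
    rw [cosh_le_cosh, abs_mul, abs_mul]
    exact mul_le_mul_of_nonneg_right (hyx k) (abs_nonneg t)
  have hle : ∑ k, cosh (y k * t) ≤ n * cosh (x₁ * t) := by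
    simpa using sum_le_sum fun k (_ : k ∈ Finset.univ) => hk k
  have : (n : ℝ) ≤ 1 := by exact_mod_cast Nat.lt_succ_iff.1 hn
  have := cosh_pos (x₂ * t)
  have := cosh_pos (x₁ * t)
  unfold coshSum at ht
  nlinarith

theorem coshSum_pos_of_lt {n : ℕ} {x₁ x₂ t₀ t₁ : ℝ} {y : Fin n → ℝ}
    (hyx : ∀ k, |y k| < |x₁|) (ht₀ : 0 < t₀) (ht : t₀ < t₁) (h₀ : coshSum x₁ x₂ y t₀ = 0) :
    0 < coshSum x₁ x₂ y t₁ := by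
  have hn := two_le_of_coshSum_eq_zero (fun k => (hyx k).le) h₀
  set θ := t₁ / t₀
  have hθ : 1 < θ := (one_lt_div ht₀).2 ht
  have hgap : ∀ z, coshGap θ (cosh (z * t₀) - 1) = cosh (z * t₁) - cosh (z * t₀) := fun z => by
    rw [coshGap_cosh_sub_one (by linarith), ← mul_assoc, mul_comm θ, mul_assoc,
      div_mul_cancel₀ _ ht₀.ne']
  have hs₀ : ∀ k ∈ Finset.univ, 0 ≤ cosh (y k * t₀) - 1 := fun k _ =>
    sub_nonneg.2 (one_le_cosh _)
  have hsa : ∀ k ∈ Finset.univ, cosh (y k * t₀) - 1 < cosh (x₁ * t₀) - 1 := fun k _ => by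
    rw [sub_lt_sub_iff_right, cosh_lt_cosh, abs_mul, abs_mul]
    exact mul_lt_mul_of_pos_right (hyx k) (abs_pos.2 ht₀.ne')
  have ha : 0 < cosh (x₁ * t₀) - 1 :=
    (hs₀ ⟨0, by omega⟩ (Finset.mem_univ _)).trans_lt (hsa _ (Finset.mem_univ _))
  have hsum : ∑ k, (cosh (y k * t₀) - 1) ≤ (cosh (x₁ * t₀) - 1) + (cosh (x₂ * t₀) - 1) := by
    have : (2 : ℝ) ≤ n := by exact_mod_cast hn
    unfold coshSum at h₀
    simp only [sum_sub_distrib, sum_const, card_univ, Fintype.card_fin, nsmul_eq_mul, mul_one]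
    linarith
  have key := (strictConvexOn_coshGap hθ).sum_map_lt_map_add_map_of_map_zero (coshGap_zero θ)
    (strictMonoOn_coshGap hθ) Finset.univ ha (sub_nonneg.2 (one_le_cosh _)) hs₀ hsa hsum
  simp only [hgap, sum_sub_distrib] at key
  unfold coshSum at h₀ ⊢
  linarith

theorem cosh_sum_at_most_one_zero_general (n : ℕ) (x₁ x₂ : ℝ) (y : Fin n → ℝ)
    (hx₁ : 0 < x₁) (hy : ∀ k, 0 < y k) (hxy : ∀ k, x₁ > y k) :
    Set.Subsingleton {t : ℝ | t ∈ Set.Ioi (0 : ℝ) ∧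
      Real.cosh (x₁ * t) + Real.cosh (x₂ * t) - ∑ k, Real.cosh (y k * t) = 0} := by
  have hyx : ∀ k, |y k| < |x₁| := fun k => by
    rw [abs_of_pos (hy k), abs_of_pos hx₁]; exact hxy k
  rintro a ⟨ha, hfa⟩ b ⟨hb, hfb⟩
  by_contra hab
  rcases lt_or_gt_of_ne hab with h | h
  · exact (coshSum_pos_of_lt hyx ha h hfa).ne' hfb
  · exact (coshSum_pos_of_lt hyx hb h hfb).ne' hfa

theorem cosh_sum_at_most_one_zero (n : ℕ) (x₁ x₂ : ℝ) (y : Fin n → ℝ)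
    (hx₁ : 0 < x₁) (hx₂ : 0 < x₂) (hy : ∀ k, 0 < y k) (hxy : ∀ k, x₁ > y k) :
    Set.Subsingleton {t : ℝ | t ∈ Set.Ioi (0 : ℝ) ∧
      Real.cosh (x₁ * t) + Real.cosh (x₂ * t) - ∑ k, Real.cosh (y k * t) = 0} :=
  cosh_sum_at_most_one_zero_general n x₁ x₂ y hx₁ hy hxy
end

section
/- In the free group F₂ = ⟨a, b⟩, define θ on generators by θ(a) = ξ₁⁺ξ₂⁻, θ(a⁻¹) = ξ₂⁺ξ₁⁻, θ(b) = ξ₂⁺ξ₃⁻, θ(b⁻¹) = ξ₃⁺ξ₂⁻ (words in the six letters ξᵢ^±, where ξᵢ⁺ and ξᵢ⁻ are regarded as inverse to each other). Then for any cyclically reduced word s₁⋯sₙ in {a^{±1}, b^{±1}}, in the free reduction of θ(s₁)⋯θ(sₙ) no block θ(s_j) has both of its letters cancelled. -/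
/-!
Each block is a two-letter word `θ(s) = u_s v_s⁻¹` with `u_s ≠ v_s`, so in `θ(s₁)⋯θ(sₙ)`
cancellation can only start at a junction `v_{sⱼ}⁻¹ u_{sⱼ₊₁}`. If it does, the two blocks
collapse to `u_{sⱼ} v_{sⱼ₊₁}⁻¹`, which cannot cancel further because `sⱼ₊₁ ≠ sⱼ⁻¹`; and for `θ`
two consecutive junctions never both cancel. Collapsing the cancelling junctions therefore
already gives a reduced word, in which every block has kept one or both of its letters.
-/

/-- The image of a generator letter of `F₂` under `θ`, as a word in the letters
`ξ₁, ξ₂, ξ₃` (elements of `Fin 3`, with the Bool recording inversion):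
`θ(a) = ξ₁ξ₂⁻¹`, `θ(a⁻¹) = ξ₂ξ₁⁻¹`, `θ(b) = ξ₂ξ₃⁻¹`, `θ(b⁻¹) = ξ₃ξ₂⁻¹`. -/
def thetaBlock (s : Fin 2 × Bool) : List (Fin 3 × Bool) :=
  if s.1 = 0 then
    if s.2 then [(0, true), (1, false)] else [(1, true), (0, false)]
  else
    if s.2 then [(1, true), (2, false)] else [(2, true), (1, false)]

/-- A word is cyclically reduced if it is reduced and its first and last letters
are not mutually inverse. -/
def IsCyclicallyReduced {α : Type*} [DecidableEq α] (L : List (α × Bool)) : Prop :=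
  FreeGroup.reduce L = L ∧
    ∀ x ∈ L.head?, ∀ y ∈ L.getLast?, ¬(x.1 = y.1 ∧ x.2 = !y.2)

namespace MulInvBlocks

open FreeGroup List

variable {α β : Type*} (u v : β → α)

def block (s : β) : List (α × Bool) := [(u s, true), (v s, false)]

variable [DecidableEq α]

/-- What is left of each block `u s (v s)⁻¹` after cancelling, greedily from the left, the
junctions `(v s)⁻¹ (u t)` with `v s = u t`. -/
def survivingPieces : List β → List (List (α × Bool))
  | [] => []
  | [s] => [block u v s]
  | s :: t :: r =>
    if v s = u t then [(u s, true)] :: [(v t, false)] :: survivingPieces r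
    else block u v s :: survivingPieces (t :: r)

theorem red_flatMap_block_flatten_survivingPieces :
    ∀ L : List β, Red (L.flatMap (block u v)) (survivingPieces u v L).flatten
  | [] => Red.refl
  | [s] => by simp [survivingPieces, Red.refl]
  | s :: t :: r => by
    by_cases h : v s = u t
    · have hst : Red (block u v s ++ block u v t) [(u s, true), (v t, false)] := by
        simp only [block, h, cons_append, nil_append]
        exact Relation.ReflTransGen.single (Red.Step.cons (Red.Step.cons_not (b := false)))
      simpa [survivingPieces, h] using hst.append_append
        (red_flatMap_block_flatten_survivingPieces r)
    · simpa [survivingPieces, h] using (Red.refl (L := block u v s)).append_append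
        (red_flatMap_block_flatten_survivingPieces (t :: r))

theorem forall₂_survivingPieces : ∀ L : List β,
    Forall₂ (fun w s => w ≠ [] ∧ w <:+: block u v s) (survivingPieces u v L) L
  | [] => .nil
  | [s] => .cons ⟨by simp [block], infix_refl _⟩ .nil
  | s :: t :: r => by
    by_cases h : v s = u t
    · rw [survivingPieces, if_pos h]
      exact .cons ⟨by simp, ⟨[], [(v s, false)], rfl⟩⟩
        (.cons ⟨by simp, ⟨[(u t, true)], [], rfl⟩⟩ (forall₂_survivingPieces r))
    · rw [survivingPieces, if_neg h]
      exact .cons ⟨by simp [block], infix_refl _⟩ (forall₂_survivingPieces (t :: r))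

theorem exists_flatten_survivingPieces_eq_cons (t : β) (r : List β) :
    ∃ w, (survivingPieces u v (t :: r)).flatten = (u t, true) :: w := by
  match r with
  | [] => exact ⟨_, rfl⟩
  | t' :: r' =>
    by_cases h : v t = u t'
    · simp [survivingPieces, h]
    · simp [survivingPieces, h, block]

theorem isReduced_flatten_survivingPieces {R : β → β → Prop}
    (hne : ∀ s, u s ≠ v s)
    (hmerge : ∀ s t, R s t → v s = u t → u s ≠ v t)
    (hsep : ∀ s t w, R s t → R t w → v s = u t → v t ≠ u w) :
    ∀ {L : List β}, L.IsChain R → IsReduced (survivingPieces u v L).flatten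
  | [], _ => .nil
  | [s], _ => by simp [survivingPieces, block, isReduced_cons_cons, hne s]
  | s :: t :: r, hL => by
    obtain ⟨hst, htr⟩ := isChain_cons_cons.mp hL
    by_cases h : v s = u t
    · match r, htr with
      | [], _ => simpa [survivingPieces, block, h, isReduced_cons_cons] using hmerge s t hst h
      | w :: r', htr =>
        obtain ⟨htw, hwr⟩ := isChain_cons_cons.mp htr
        obtain ⟨rest, hrest⟩ := exists_flatten_survivingPieces_eq_cons u v w r'
        have ih := isReduced_flatten_survivingPieces hne hmerge hsep hwr
        rw [hrest] at ih
        simp [survivingPieces, h, hrest, isReduced_cons_cons, ih, hmerge s t hst h,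
          hsep s t w hst htw h]
    · obtain ⟨rest, hrest⟩ := exists_flatten_survivingPieces_eq_cons u v t r
      have ih := isReduced_flatten_survivingPieces hne hmerge hsep htr
      rw [hrest] at ih
      simp [survivingPieces, block, h, hrest, isReduced_cons_cons, ih, hne s]

theorem toWord_mk_flatMap_block {R : β → β → Prop}
    (hne : ∀ s, u s ≠ v s)
    (hmerge : ∀ s t, R s t → v s = u t → u s ≠ v t)
    (hsep : ∀ s t w, R s t → R t w → v s = u t → v t ≠ u w)
    {L : List β} (hL : L.IsChain R) :
    (mk (L.flatMap (block u v))).toWord = (survivingPieces u v L).flatten := by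
  rw [toWord_mk, reduce.eq_of_red (red_flatMap_block_flatten_survivingPieces u v L)]
  exact (isReduced_flatten_survivingPieces u v hne hmerge hsep hL).reduce_eq

end MulInvBlocks

/-- With `a = x₀`, `b = x₁` and `ξ₁, ξ₂, ξ₃` indexed by `Fin 3`, `θ(xᵢ) = ξᵢ ξᵢ₊₁⁻¹`. -/
def thetaNum (s : Fin 2 × Bool) : Fin 3 := if s.2 then s.1.castSucc else s.1.succ

def thetaDen (s : Fin 2 × Bool) : Fin 3 := if s.2 then s.1.succ else s.1.castSucc

theorem thetaBlock_eq_block : thetaBlock = MulInvBlocks.block thetaNum thetaDen := by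
  funext s
  revert s
  decide

/-- In the free reduction of `θ(s₁)⋯θ(sₙ)` for a cyclically reduced word `s₁⋯sₙ`,
no block `θ(sⱼ)` has both of its letters cancelled: the reduced word is a
concatenation of nonempty contiguous pieces, one from each block. -/
theorem theta_no_block_fully_cancelled (L : List (Fin 2 × Bool))
    (hL : IsCyclicallyReduced L) :
    ∃ ws : List (List (Fin 3 × Bool)),
      (FreeGroup.mk (L.flatMap thetaBlock)).toWord = ws.flatten ∧
      List.Forall₂ (fun w s => w ≠ [] ∧ w <:+: thetaBlock s) ws L := by
  refine ⟨MulInvBlocks.survivingPieces thetaNum thetaDen L, ?_, ?_⟩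
  · rw [thetaBlock_eq_block]
    exact MulInvBlocks.toWord_mk_flatMap_block thetaNum thetaDen (by decide) (by decide)
      (by decide) (FreeGroup.IsReduced.of_reduce_eq hL.1)
  · rw [thetaBlock_eq_block]
    exact MulInvBlocks.forall₂_survivingPieces thetaNum thetaDen L
end

section
/- With θ as above on F₂ = ⟨a, b⟩ into the free group on ξ₁, ξ₂, ξ₃: if s₁⋯sₙ is cyclically reduced in {a^{±1}, b^{±1}}, then the reduced word θ(s₁⋯sₙ) is either cyclically reduced, or of the form t w t' where w is cyclically reduced and t' = t⁻¹ (i.e., {t, t'} = {ξᵢ, ξᵢ⁻¹} for some i). -/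
open FreeGroup (Red isReduced_cons_cons)

theorem isCyclicallyReduced_iff_freeGroup_isCyclicallyReduced {α : Type*} [DecidableEq α]
    {L : List (α × Bool)} : IsCyclicallyReduced L ↔ FreeGroup.IsCyclicallyReduced L := by
  rw [IsCyclicallyReduced, FreeGroup.isCyclicallyReduced_iff, ← FreeGroup.isReduced_iff_reduce_eq]
  refine and_congr_right fun _ => ?_
  simp only [not_and, Bool.not_eq_not]
  exact ⟨fun h a ha b hb e => (h b hb a ha e.symm).symm,
    fun h x hx y hy e => (h y hy x hx e.symm).symm⟩

theorem FreeGroup.IsCyclicallyReduced.isReduced_append_head {α : Type*} {s : α × Bool}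
    {l : List (α × Bool)} (h : FreeGroup.IsCyclicallyReduced (s :: l)) :
    FreeGroup.IsReduced (s :: l ++ [s]) :=
  List.isChain_append.mpr ⟨h.isReduced, List.isChain_singleton s, fun x hx y hy => by
    obtain rfl : y = s := by simpa using hy.symm
    exact h.2 x hx y rfl⟩

def thetaFst (s : Fin 2 × Bool) : Fin 3 :=
  if s.1 = 0 then (if s.2 then 0 else 1) else (if s.2 then 1 else 2)

def thetaSnd (s : Fin 2 × Bool) : Fin 3 :=
  if s.1 = 0 then (if s.2 then 1 else 0) else (if s.2 then 2 else 1)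

theorem thetaBlock_eq (s : Fin 2 × Bool) :
    thetaBlock s = [(thetaFst s, true), (thetaSnd s, false)] := by
  revert s; decide

theorem thetaFst_ne_thetaSnd (s : Fin 2 × Bool) : thetaFst s ≠ thetaSnd s := by
  revert s; decide

theorem thetaFst_ne_thetaSnd_of_cancel {s s' : Fin 2 × Bool} (h : FreeGroup.IsReduced [s, s'])
    (hc : thetaSnd s = thetaFst s') : thetaFst s ≠ thetaSnd s' := by
  revert s s'; unfold FreeGroup.IsReduced; decide

theorem thetaSnd_ne_thetaFst_of_cancel {s s' s'' : Fin 2 × Bool}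
    (h : FreeGroup.IsReduced [s, s', s'']) (hc : thetaSnd s = thetaFst s') :
    thetaSnd s' ≠ thetaFst s'' := by
  revert s s' s''; unfold FreeGroup.IsReduced; decide

/-- The reduced form of `ξ_{thetaSnd s}⁻¹ θ(rest)` when `s :: rest` is reduced. -/
def thetaRedFrom : Fin 2 × Bool → List (Fin 2 × Bool) → List (Fin 3 × Bool)
  | s, [] => [(thetaSnd s, false)]
  | s, s' :: rest =>
    if thetaSnd s = thetaFst s' then thetaRedFrom s' rest
    else (thetaSnd s, false) :: (thetaFst s', true) :: thetaRedFrom s' rest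

def thetaRed : List (Fin 2 × Bool) → List (Fin 3 × Bool)
  | [] => []
  | s :: rest => (thetaFst s, true) :: thetaRedFrom s rest

theorem red_thetaRedFrom (s : Fin 2 × Bool) (rest : List (Fin 2 × Bool)) :
    Red ((thetaSnd s, false) :: rest.flatMap thetaBlock) (thetaRedFrom s rest) := by
  induction rest generalizing s with
  | nil => exact Red.refl
  | cons s' rest ih =>
    rw [List.flatMap_cons, thetaBlock_eq, thetaRedFrom]
    split_ifs with hc
    · rw [hc]
      exact (FreeGroup.Red.Step.cons_not_rev (b := true)).to_red.trans (ih s')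
    · exact (ih s').cons_cons.cons_cons

theorem red_thetaRed (L : List (Fin 2 × Bool)) : Red (L.flatMap thetaBlock) (thetaRed L) := by
  cases L with
  | nil => exact Red.refl
  | cons s rest =>
    rw [List.flatMap_cons, thetaBlock_eq]
    exact (red_thetaRedFrom s rest).cons_cons

theorem thetaRedFrom_eq_cons_of_cancel {p s : Fin 2 × Bool} {rest : List (Fin 2 × Bool)}
    (h : FreeGroup.IsReduced (p :: s :: rest)) (hc : thetaSnd p = thetaFst s) :
    ∃ u, thetaRedFrom s rest = (thetaSnd s, false) :: u := by
  cases rest with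
  | nil => exact ⟨[], rfl⟩
  | cons s' rest =>
    have hs' : thetaSnd s ≠ thetaFst s' :=
      thetaSnd_ne_thetaFst_of_cancel (h.infix ⟨[], rest, rfl⟩) hc
    exact ⟨_, if_neg hs'⟩

theorem thetaRedFrom_append_eq_of_cancel {s t n : Fin 2 × Bool} {m : List (Fin 2 × Bool)}
    (h : FreeGroup.IsReduced (s :: m ++ [t, n])) (hc : thetaSnd t = thetaFst n) :
    ∃ u, thetaRedFrom s (m ++ [t]) = u ++ [(thetaFst t, true), (thetaSnd t, false)] := by
  induction m generalizing s with
  | nil =>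
    have hst : thetaSnd s ≠ thetaFst t := fun hcan =>
      thetaSnd_ne_thetaFst_of_cancel h hcan hc
    exact ⟨[(thetaSnd s, false)], if_neg hst⟩
  | cons s' m ih =>
    obtain ⟨u, hu⟩ := ih (isReduced_cons_cons.mp h).2
    rw [List.cons_append, thetaRedFrom]
    split_ifs
    · exact ⟨u, hu⟩
    · exact ⟨_ :: _ :: u, by rw [hu]; rfl⟩

theorem thetaRedFrom_eq_append_getLast (s : Fin 2 × Bool) (rest : List (Fin 2 × Bool)) :
    ∃ u, thetaRedFrom s rest =
      u ++ [(thetaSnd ((s :: rest).getLast (List.cons_ne_nil s rest)), false)] := by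
  induction rest generalizing s with
  | nil => exact ⟨[], rfl⟩
  | cons s' rest ih =>
    obtain ⟨u, hu⟩ := ih s'
    rw [thetaRedFrom, List.getLast_cons_cons]
    split_ifs
    · exact ⟨u, hu⟩
    · exact ⟨_ :: _ :: u, by rw [hu]; rfl⟩

theorem isReduced_thetaRed {L : List (Fin 2 × Bool)} (h : FreeGroup.IsReduced L) :
    FreeGroup.IsReduced (thetaRed L) := by
  cases L with
  | nil => exact FreeGroup.IsReduced.nil
  | cons s rest =>
    induction rest generalizing s with
    | nil => simpa [thetaRed, thetaRedFrom, isReduced_cons_cons] using thetaFst_ne_thetaSnd s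
    | cons s' rest ih =>
      have ih' := ih s' (isReduced_cons_cons.mp h).2
      simp only [thetaRed, thetaRedFrom] at ih' ⊢
      split_ifs with hc
      · obtain ⟨u, hu⟩ := thetaRedFrom_eq_cons_of_cancel h hc
        rw [hu] at ih' ⊢
        refine isReduced_cons_cons.mpr ⟨?_, (isReduced_cons_cons.mp ih').2⟩
        simpa using thetaFst_ne_thetaSnd_of_cancel (h.infix ⟨[], rest, rfl⟩) hc
      · simpa [isReduced_cons_cons, thetaFst_ne_thetaSnd s, hc] using ih'

theorem toWord_mk_flatMap_thetaBlock {L : List (Fin 2 × Bool)} (h : FreeGroup.IsReduced L) :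
    (FreeGroup.mk (L.flatMap thetaBlock)).toWord = thetaRed L := by
  rw [FreeGroup.toWord_mk, FreeGroup.reduce.eq_of_red (red_thetaRed L),
    (isReduced_thetaRed h).reduce_eq]

theorem isCyclicallyReduced_thetaRed_of_not_cancel {s : Fin 2 × Bool}
    {rest : List (Fin 2 × Bool)} (h : FreeGroup.IsReduced (s :: rest))
    (hc : thetaSnd ((s :: rest).getLast (List.cons_ne_nil s rest)) ≠ thetaFst s) :
    FreeGroup.IsCyclicallyReduced (thetaRed (s :: rest)) := by
  obtain ⟨u, hu⟩ := thetaRedFrom_eq_append_getLast s rest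
  have hred := isReduced_thetaRed h
  rw [thetaRed, hu] at hred ⊢
  exact FreeGroup.isCyclicallyReduced_cons_append_iff.mpr ⟨hred, by simpa using hc⟩

theorem thetaRed_eq_conj_of_cancel {s t : Fin 2 × Bool} {m : List (Fin 2 × Bool)}
    (h : FreeGroup.IsCyclicallyReduced (s :: m ++ [t])) (hc : thetaSnd t = thetaFst s) :
    ∃ w, thetaRed (s :: m ++ [t]) = (thetaFst s, true) :: (w ++ [(thetaFst s, false)]) ∧
      FreeGroup.IsCyclicallyReduced w := by
  have hred := h.isReduced
  have hts : t.1 = s.1 → t.2 = s.2 := h.2 t (by simp only [List.getLast?_concat]; rfl) s rfl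
  have hred_wrap : FreeGroup.IsReduced (s :: m ++ [t, s]) := by
    simpa using h.isReduced_append_head
  obtain ⟨u, hu⟩ := thetaRedFrom_append_eq_of_cancel hred_wrap hc
  obtain ⟨v, hv⟩ := thetaRedFrom_eq_cons_of_cancel (rest := m ++ [t])
    (isReduced_cons_cons.mpr ⟨hts, hred⟩) hc
  obtain ⟨u', rfl⟩ : ∃ u', u = (thetaSnd s, false) :: u' := by
    rw [hu] at hv
    cases u with
    | nil => simp at hv
    | cons x u' => exact ⟨u', by simp_all⟩
  have hst : thetaSnd s ≠ thetaFst t :=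
    thetaSnd_ne_thetaFst_of_cancel (isReduced_cons_cons.mpr
      ⟨hts, isReduced_cons_cons.mpr ⟨fun e => (hts e.symm).symm, .singleton⟩⟩) hc
  have hthetaRed : thetaRed (s :: m ++ [t]) = (thetaFst s, true) ::
      ((thetaSnd s, false) :: u' ++ [(thetaFst t, true)] ++ [(thetaFst s, false)]) := by
    rw [List.cons_append, thetaRed, hu, ← hc]; simp
  refine ⟨_, hthetaRed, FreeGroup.isCyclicallyReduced_cons_append_iff.mpr ⟨?_, ?_⟩⟩
  · have hred' := isReduced_thetaRed hred
    rw [hthetaRed] at hred'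
    exact hred'.infix ⟨[(thetaFst s, true)], [(thetaFst s, false)], rfl⟩
  · simpa using hst.symm

/-- For a cyclically reduced word `s₁⋯sₙ` in `F₂`, the reduced word `θ(s₁⋯sₙ)` is
either cyclically reduced, or of the form `t w t⁻¹` with `w` cyclically reduced. -/
theorem theta_cyclically_reduced_or_conjugate (L : List (Fin 2 × Bool))
    (hL : IsCyclicallyReduced L) :
    IsCyclicallyReduced ((FreeGroup.mk (L.flatMap thetaBlock)).toWord) ∨
    ∃ (t : Fin 3 × Bool) (w : List (Fin 3 × Bool)),
      (FreeGroup.mk (L.flatMap thetaBlock)).toWord = t :: (w ++ [(t.1, !t.2)]) ∧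
      IsCyclicallyReduced w := by
  simp only [isCyclicallyReduced_iff_freeGroup_isCyclicallyReduced] at hL ⊢
  rw [toWord_mk_flatMap_thetaBlock hL.isReduced]
  rcases L with _ | ⟨s, rest⟩
  · exact .inl (by simp [thetaRed])
  by_cases hc : thetaSnd ((s :: rest).getLast (List.cons_ne_nil s rest)) = thetaFst s
  · obtain ⟨m, t, rfl⟩ := rest.eq_nil_or_concat'.resolve_left
      (by rintro rfl; exact thetaFst_ne_thetaSnd s hc.symm)
    obtain ⟨w, hw, hcyc⟩ := thetaRed_eq_conj_of_cancel hL (by simpa using hc)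
    exact .inr ⟨_, w, hw, hcyc⟩
  · exact .inl (isCyclicallyReduced_thetaRed_of_not_cancel hL.isReduced hc)
end

section
/- For every (x, y, z) ∈ ℂ³ there exist matrices M, N ∈ SL(2, ℂ) with tr M = x, tr N = y, and tr MN = z. -/
/-! With `M = [[x, -1], [1, 0]]` and `N = [[0, u], [-u⁻¹, y]]` the traces of `M` and `N` are `x`
and `y`, while `tr (M N) = u + u⁻¹`. Every `z` has this form over an algebraically closed field:
take for `u` a root of `t² - z t + 1`, which is nonzero because the constant term is `1`. -/

open Matrix Polynomial

section SL2

variable {R : Type*} [CommRing R]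

def companionSL (x : R) : SpecialLinearGroup (Fin 2) R :=
  ⟨!![x, -1; 1, 0], by simp [det_fin_two_of]⟩

def antidiagSL (u : Rˣ) (y : R) : SpecialLinearGroup (Fin 2) R :=
  ⟨!![0, u; -↑u⁻¹, y], by simp [det_fin_two_of]⟩

@[simp]
theorem trace_companionSL (x : R) : trace (companionSL x : Matrix (Fin 2) (Fin 2) R) = x := by
  simp [companionSL, trace_fin_two_of]

@[simp]
theorem trace_antidiagSL (u : Rˣ) (y : R) :
    trace (antidiagSL u y : Matrix (Fin 2) (Fin 2) R) = y := by
  simp [antidiagSL, trace_fin_two_of]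

theorem trace_companionSL_mul_antidiagSL (x y : R) (u : Rˣ) :
    trace ((companionSL x * antidiagSL u y : SpecialLinearGroup (Fin 2) R) :
      Matrix (Fin 2) (Fin 2) R) = u + ↑u⁻¹ := by
  change trace (!![x, -1; 1, 0] * !![0, (u : R); -↑u⁻¹, y]) = _
  rw [mul_fin_two, trace_fin_two_of]
  ring

end SL2

theorem IsAlgClosed.exists_unit_add_inv_eq {K : Type*} [Field K] [IsAlgClosed K] (z : K) :
    ∃ u : Kˣ, (u : K) + ↑u⁻¹ = z := by
  obtain ⟨t, ht⟩ := IsAlgClosed.exists_root (X ^ 2 - C z * X + 1 : K[X])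
    (by rw [show (X ^ 2 - C z * X + 1 : K[X]).degree = 2 by compute_degree!]; decide)
  have hroot : t ^ 2 - z * t + 1 = 0 := by simpa using ht
  have ht0 : t ≠ 0 := by
    rintro rfl
    simp at hroot
  refine ⟨Units.mk0 t ht0, ?_⟩
  simp only [Units.val_inv_eq_inv_val, Units.val_mk0]
  field_simp
  linear_combination hroot

theorem fricke_vogt_surjectivity (x y z : ℂ) :
    ∃ M N : Matrix.SpecialLinearGroup (Fin 2) ℂ,
      Matrix.trace (M : Matrix (Fin 2) (Fin 2) ℂ) = x ∧
      Matrix.trace (N : Matrix (Fin 2) (Fin 2) ℂ) = y ∧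
      Matrix.trace ((M * N : Matrix.SpecialLinearGroup (Fin 2) ℂ) : Matrix (Fin 2) (Fin 2) ℂ) = z := by
  obtain ⟨u, hu⟩ := IsAlgClosed.exists_unit_add_inv_eq z
  exact ⟨companionSL x, antidiagSL u y, trace_companionSL x, trace_antidiagSL u y,
    (trace_companionSL_mul_antidiagSL x y u).trans hu⟩
end
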